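/- Let A be a (1̄,t)-locating array with N rows, k columns, alphabet sizes (v₁,…,v_k), and fix i∈{1,…,k} and a with v_i < a ≤ 2v_i. Let A' be obtained from A by relabeling, in column i only, the symbols 0,1,…,a−v_i−1 to v_i,v_i+1,…,a−1 respectively. Then the 2N×k vertical juxtaposition of A and A' is a (1̄,t)-locating array with alphabet sizes (v₁,…,v_{i−1},a,v_{i+1},…,v_k). -/

import Mathlib

/-!
The stacked array is the two relabelings `id` and `φ` of `A`, where `φ` moves the symbols
`x < a - v_c` of column `c` up to `x + v_c`. Both relabelings are injective on the old alphabet, so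
the rows of either half supporting an interaction `(I, σ)` are either empty or exactly the rows of
`A` supporting its unique preimage `τ`, an interaction of `A`. Every new interaction has a preimage
under `id` or under `φ` (the new symbols `≥ v_c` come from `φ`, using `a ≤ 2 v_c`), so coverage of
the stack follows from that of `A`, and equal supports in the stack force equal supports of the
preimages in `A`, hence equal interactions.
-/

open Finset

/-- The set of rows of array `A` containing the interaction `(I, σ)`. -/
def rowsOf {R ι : Type*} [Fintype R] [DecidableEq ι] (A : R → ι → ℕ)
    (I : Finset ι) (σ : ι → ℕ) : Finset R :=
  Finset.univ.filter fun r => ∀ i ∈ I, A r i = σ i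

/-- `(I, σ)` is a `t`-way interaction for alphabet sizes `v`. -/
def isInter {ι : Type*} (v : ι → ℕ) (t : ℕ) (I : Finset ι) (σ : ι → ℕ) : Prop :=
  I.card = t ∧ ∀ i ∈ I, σ i < v i

/-- Mixed covering array of strength `t`: every `t`-way interaction appears in some row. -/
def isMCA {R ι : Type*} [Fintype R] [DecidableEq ι] (A : R → ι → ℕ) (v : ι → ℕ) (t : ℕ) : Prop :=
  ∀ I σ, isInter v t I σ → (rowsOf A I σ).Nonempty

/-- `(1,t)`-locating: distinct `t`-way interactions have distinct row supports. -/
def isLocating {R ι : Type*} [Fintype R] [DecidableEq ι] (A : R → ι → ℕ) (v : ι → ℕ) (t : ℕ) : Prop :=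
  ∀ I₁ σ₁ I₂ σ₂, isInter v t I₁ σ₁ → isInter v t I₂ σ₂ →
    rowsOf A I₁ σ₁ = rowsOf A I₂ σ₂ → I₁ = I₂ ∧ ∀ i ∈ I₁, σ₁ i = σ₂ i

/-- `(1̄,t)`-locating array: an MCA which is `(1,t)`-locating. -/
def isLA {R ι : Type*} [Fintype R] [DecidableEq ι] (A : R → ι → ℕ) (v : ι → ℕ) (t : ℕ) : Prop :=
  isMCA A v t ∧ isLocating A v t

/-- The last `t` columns (0-based indices `≥ k - t`). -/
def lastCols (k t : ℕ) : Finset (Fin k) :=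
  Finset.univ.filter fun i => k - t ≤ (i : ℕ)

section Relabel

variable {R ι : Type*} [Fintype R] [DecidableEq ι]

def relabel (φ : ι → ℕ → ℕ) (A : R → ι → ℕ) : R → ι → ℕ :=
  fun r j => φ j (A r j)

def IsLift (φ : ι → ℕ → ℕ) (v : ι → ℕ) (I : Finset ι) (σ τ : ι → ℕ) : Prop :=
  ∀ i ∈ I, τ i < v i ∧ φ i (τ i) = σ i

theorem rowsOf_sumElim {R₁ R₂ : Type*} [Fintype R₁] [Fintype R₂] (A₁ : R₁ → ι → ℕ)
    (A₂ : R₂ → ι → ℕ) (I : Finset ι) (σ : ι → ℕ) :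
    rowsOf (Sum.elim A₁ A₂) I σ = (rowsOf A₁ I σ).disjSum (rowsOf A₂ I σ) := by
  ext (r | r) <;> simp [rowsOf]

variable {φ : ι → ℕ → ℕ} {v : ι → ℕ} {A : R → ι → ℕ} {I : Finset ι} {σ τ : ι → ℕ}

theorem isLift_of_mem_rowsOf_relabel (hA : ∀ r j, A r j < v j) {r : R}
    (hr : r ∈ rowsOf (relabel φ A) I σ) : IsLift φ v I σ (A r) :=
  fun i hi => ⟨hA r i, (mem_filter.1 hr).2 i hi⟩

theorem rowsOf_relabel_of_isLift (hφ : ∀ j, Set.InjOn (φ j) (Set.Iio (v j)))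
    (hA : ∀ r j, A r j < v j) (h : IsLift φ v I σ τ) :
    rowsOf (relabel φ A) I σ = rowsOf A I τ := by
  ext r
  simp only [rowsOf, mem_filter_univ]
  refine forall₂_congr fun i hi => ?_
  rw [← (h i hi).2]
  exact (hφ i).eq_iff (hA r i) (h i hi).1

variable {t : ℕ}

theorem isLA.rowsOf_relabel_nonempty (hLA : isLA A v t)
    (hφ : ∀ j, Set.InjOn (φ j) (Set.Iio (v j))) (hA : ∀ r j, A r j < v j) (hI : I.card = t) (h : IsLift φ v I σ τ) :
    (rowsOf (relabel φ A) I σ).Nonempty := by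
  rw [rowsOf_relabel_of_isLift hφ hA h]
  exact hLA.1 I τ ⟨hI, fun i hi => (h i hi).1⟩

theorem isLA.eq_of_rowsOf_relabel_eq (hLA : isLA A v t)
    (hφ : ∀ j, Set.InjOn (φ j) (Set.Iio (v j))) (hA : ∀ r j, A r j < v j)
    {I₁ I₂ : Finset ι} {σ₁ σ₂ τ₁ : ι → ℕ} (hI₁ : I₁.card = t) (hI₂ : I₂.card = t)
    (h₁ : IsLift φ v I₁ σ₁ τ₁)
    (heq : rowsOf (relabel φ A) I₁ σ₁ = rowsOf (relabel φ A) I₂ σ₂) :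
    I₁ = I₂ ∧ ∀ i ∈ I₁, σ₁ i = σ₂ i := by
  obtain ⟨r, hr⟩ := hLA.rowsOf_relabel_nonempty hφ hA hI₁ h₁
  have h₂ := isLift_of_mem_rowsOf_relabel hA (heq ▸ hr)
  rw [rowsOf_relabel_of_isLift hφ hA h₁, rowsOf_relabel_of_isLift hφ hA h₂] at heq
  obtain ⟨rfl, hτ⟩ := hLA.2 I₁ τ₁ I₂ (A r) ⟨hI₁, fun i hi => (h₁ i hi).1⟩
    ⟨hI₂, fun i hi => (h₂ i hi).1⟩ heq
  exact ⟨rfl, fun i hi => by rw [← (h₁ i hi).2, ← (h₂ i hi).2, hτ i hi]⟩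

theorem isLA_sumElim_relabel {φ₁ φ₂ : ι → ℕ → ℕ} {w : ι → ℕ} (hLA : isLA A v t)
    (hA : ∀ r j, A r j < v j) (hφ₁ : ∀ j, Set.InjOn (φ₁ j) (Set.Iio (v j)))
    (hφ₂ : ∀ j, Set.InjOn (φ₂ j) (Set.Iio (v j)))
    (hlift : ∀ I σ, isInter w t I σ → (∃ τ, IsLift φ₁ v I σ τ) ∨ ∃ τ, IsLift φ₂ v I σ τ) :
    isLA (Sum.elim (relabel φ₁ A) (relabel φ₂ A)) w t := by
  refine ⟨fun I σ hσ => ?_, fun I₁ σ₁ I₂ σ₂ h₁ h₂ heq => ?_⟩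
  · rw [rowsOf_sumElim]
    rcases hlift I σ hσ with ⟨τ, hτ⟩ | ⟨τ, hτ⟩
    · obtain ⟨r, hr⟩ := hLA.rowsOf_relabel_nonempty hφ₁ hA hσ.1 hτ
      exact ⟨Sum.inl r, inl_mem_disjSum.2 hr⟩
    · obtain ⟨r, hr⟩ := hLA.rowsOf_relabel_nonempty hφ₂ hA hσ.1 hτ
      exact ⟨Sum.inr r, inr_mem_disjSum.2 hr⟩
  · rw [rowsOf_sumElim, rowsOf_sumElim, disjSum_inj] at heq
    rcases hlift I₁ σ₁ h₁ with ⟨τ, hτ⟩ | ⟨τ, hτ⟩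
    · exact hLA.eq_of_rowsOf_relabel_eq hφ₁ hA h₁.1 h₂.1 hτ heq.1
    · exact hLA.eq_of_rowsOf_relabel_eq hφ₂ hA h₁.1 h₂.1 hτ heq.2

end Relabel

section ShiftColumn

variable {ι : Type*} [DecidableEq ι]

def shiftColumn (c : ι) (m s : ℕ) : ι → ℕ → ℕ :=
  fun j x => if j = c then (if x < m then x + s else x) else x

theorem injOn_shiftColumn (v : ι → ℕ) (c : ι) (m : ℕ) (j : ι) :
    Set.InjOn (shiftColumn c m (v c) j) (Set.Iio (v j)) := by
  intro x hx y hy hxy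
  simp only [Set.mem_Iio] at hx hy
  by_cases hj : j = c
  · subst hj
    simp only [shiftColumn, if_true] at hxy
    split_ifs at hxy <;> omega
  · simpa [shiftColumn, hj] using hxy

theorem exists_isLift_or_exists_isLift_shiftColumn {v : ι → ℕ} {c : ι} {a t : ℕ}
    {I : Finset ι} {σ : ι → ℕ} (ha : a ≤ 2 * v c) (hσ : isInter (Function.update v c a) t I σ) :
    (∃ τ, IsLift (fun _ => id) v I σ τ) ∨ ∃ τ, IsLift (shiftColumn c (a - v c) (v c)) v I σ τ := by
  have hlt : ∀ i ∈ I, i ≠ c → σ i < v i := fun i hi hic => by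
    simpa [Function.update_of_ne hic] using hσ.2 i hi
  by_cases hhigh : c ∈ I ∧ v c ≤ σ c
  · have hσc : σ c < a := by simpa using hσ.2 c hhigh.1
    refine Or.inr ⟨Function.update σ c (σ c - v c), fun i hi => ?_⟩
    by_cases hic : i = c
    · subst hic
      simp only [Function.update_self, shiftColumn, if_true]
      rw [if_pos (by omega)]
      omega
    · simpa [Function.update_of_ne hic, shiftColumn, hic] using hlt i hi hic
  · refine Or.inl ⟨σ, fun i hi => ⟨?_, rfl⟩⟩
    by_cases hic : i = c
    · subst hic
      exact not_le.1 fun h => hhigh ⟨hi, h⟩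
    · exact hlt i hi hic

end ShiftColumn

theorem stmt_12 {N k t : ℕ} (v : Fin k → ℕ) (c : Fin k) (a : ℕ)
    (ha2 : a ≤ 2 * v c)
    (A : Fin N → Fin k → ℕ) (hA : ∀ r j, A r j < v j) (hLA : isLA A v t) :
    isLA (fun (r : Fin N ⊕ Fin N) (j : Fin k) =>
        match r with
        | Sum.inl r => A r j
        | Sum.inr r => if j = c then (if A r j < a - v c then A r j + v c else A r j)
                       else A r j)
      (Function.update v c a) t := by
  convert isLA_sumElim_relabel hLA hA (fun _ => Function.injective_id.injOn)
    (injOn_shiftColumn v c (a - v c)) fun _ _ hσ => exists_isLift_or_exists_isLift_shiftColumn ha2 hσ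
    using 1
  funext r j
  cases r <;> rfl
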